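/- arXiv:1512.02376 — 2 statements merged into one kernel-verified Lean document; each statement's English description precedes it below -/
import Mathlib

section
/- Let in(𝒢_{D_{2m+1}}) denote the set consisting of the first-written monomial of each binomial of 𝒢_{D_{2m+1}}. If M and M′ are monomials of R such that no monomial of in(𝒢_{D_{2m+1}}) divides M and no monomial of in(𝒢_{D_{2m+1}}) divides M′, then π(M) = π(M′) implies M = M′. -/
open MvPolynomial

/-- Index type for the variables of the polynomial ring `R` in the `D_{2m+1}` case
(`n = 2m+1`).  The set `J = {2,4,…,n-1}` of even integers is realised as
`{2t+2 | t : Fin m}` and `J^c = {3,5,…,n-2}` as `{2t+3 | t : Fin (m-1)}`.  The constructors: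
`x1 ↦ x_1`, `xn ↦ x_n`, `xJ t ↦ x_{2t+2}` (`2t+2 ∈ J`), `xJc t ↦ x_{2t+3}` (`2t+3 ∈ J^c`),
`xP s t _ ↦ x_{2s+2,2t+2}` (a pair `k < ℓ` in `J`), `x1n ↦ x_{1,n}`,
`xK1 t ↦ x_{2t+2,1}`, `xKn t ↦ x_{2t+2,n}`, `yK1 t ↦ y_{2t+2,1}`, `yKn t ↦ y_{2t+2,n}`. -/
inductive DoVar (m : ℕ) : Type where
  | x1 : DoVar m
  | xn : DoVar m
  | xJ : Fin m → DoVar m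
  | xJc : Fin (m - 1) → DoVar m
  | xP : (s t : Fin m) → s < t → DoVar m
  | x1n : DoVar m
  | xK1 : Fin m → DoVar m
  | xKn : Fin m → DoVar m
  | yK1 : Fin m → DoVar m
  | yKn : Fin m → DoVar m

/-- The images of the variables under `π`, where `u_i = X i` inside
`K[u_1,…,u_n] ⊆ MvPolynomial ℕ K` and `n = 2m+1`:
`π(x_i) = u_i²` (`i ∈ J`), `π(x_j) = u_j` (`j ∈ J^c`), `π(x_1) = u_1⁴`, `π(x_n) = u_n⁴`,
`π(x_{k,ℓ}) = u_k u_ℓ` (`k < ℓ` in `J`), `π(x_{1,n}) = u_1 u_n`, `π(x_{i,1}) = u_i u_1²`,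
`π(x_{i,n}) = u_i u_n²`, `π(y_{i,1}) = u_i u_1³ u_n`, `π(y_{i,n}) = u_i u_1 u_n³`. -/
noncomputable def doImage (K : Type*) [Field K] (m : ℕ) : DoVar m → MvPolynomial ℕ K
  | .x1 => X 1 ^ 4
  | .xn => X (2 * m + 1) ^ 4
  | .xJ t => X (2 * t.val + 2) ^ 2
  | .xJc t => X (2 * t.val + 3)
  | .xP s t _ => X (2 * s.val + 2) * X (2 * t.val + 2)
  | .x1n => X 1 * X (2 * m + 1)
  | .xK1 t => X (2 * t.val + 2) * X 1 ^ 2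
  | .xKn t => X (2 * t.val + 2) * X (2 * m + 1) ^ 2
  | .yK1 t => X (2 * t.val + 2) * X 1 ^ 3 * X (2 * m + 1)
  | .yKn t => X (2 * t.val + 2) * X 1 * X (2 * m + 1) ^ 3

/-- The toric map `π : R → K[u_1,…,u_n]` for the `D_{2m+1}` configuration. -/
noncomputable def piDo (K : Type*) [Field K] (m : ℕ) :
    MvPolynomial (DoVar m) K →ₐ[K] MvPolynomial ℕ K :=
  aeval (doImage K m)

/-- The set `𝒢_{D_{2m+1}}` of binomials. -/
noncomputable def GDo (K : Type*) [Field K] (m : ℕ) : Set (MvPolynomial (DoVar m) K) :=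
  {g | (∃ (i j k l : Fin m) (hij : i < j) (hjk : j < k) (hkl : k < l),
          g = X (DoVar.xP i k (hij.trans hjk)) * X (DoVar.xP j l (hjk.trans hkl))
              - X (DoVar.xP i j hij) * X (DoVar.xP k l hkl) ∨
          g = X (DoVar.xP i l (hij.trans (hjk.trans hkl))) * X (DoVar.xP j k hjk)
              - X (DoVar.xP i j hij) * X (DoVar.xP k l hkl)) ∨
      (∃ (i j k : Fin m) (hij : i < j) (hjk : j < k),
          g = X (DoVar.xP j k hjk) * X (DoVar.xK1 i)
              - X (DoVar.xP i j hij) * X (DoVar.xK1 k) ∨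
          g = X (DoVar.xP i k (hij.trans hjk)) * X (DoVar.xK1 j)
              - X (DoVar.xP i j hij) * X (DoVar.xK1 k) ∨
          g = X (DoVar.xP j k hjk) * X (DoVar.xKn i)
              - X (DoVar.xP i j hij) * X (DoVar.xKn k) ∨
          g = X (DoVar.xP i k (hij.trans hjk)) * X (DoVar.xKn j)
              - X (DoVar.xP i j hij) * X (DoVar.xKn k) ∨
          g = X (DoVar.xJ j) * X (DoVar.xP i k (hij.trans hjk))
              - X (DoVar.xP i j hij) * X (DoVar.xP j k hjk) ∨
          g = X (DoVar.xP i j hij) * X (DoVar.xP i k (hij.trans hjk))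
              - X (DoVar.xJ i) * X (DoVar.xP j k hjk) ∨
          g = X (DoVar.xJ k) * X (DoVar.xP i j hij)
              - X (DoVar.xP i k (hij.trans hjk)) * X (DoVar.xP j k hjk)) ∨
      (∃ (i j : Fin m) (hij : i < j),
          g = X (DoVar.xJ i) * X (DoVar.xJ j) - X (DoVar.xP i j hij) ^ 2 ∨
          g = X (DoVar.xP i j hij) * X DoVar.x1 - X (DoVar.xK1 i) * X (DoVar.xK1 j) ∨
          g = X (DoVar.xP i j hij) * X DoVar.xn - X (DoVar.xKn i) * X (DoVar.xKn j) ∨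
          g = X (DoVar.xP i j hij) * X (DoVar.xK1 i) - X (DoVar.xJ i) * X (DoVar.xK1 j) ∨
          g = X (DoVar.xP i j hij) * X (DoVar.xKn i) - X (DoVar.xJ i) * X (DoVar.xKn j) ∨
          g = X (DoVar.xJ j) * X (DoVar.xK1 i) - X (DoVar.xP i j hij) * X (DoVar.xK1 j) ∨
          g = X (DoVar.xJ j) * X (DoVar.xKn i) - X (DoVar.xP i j hij) * X (DoVar.xKn j) ∨
          g = X (DoVar.xK1 j) * X (DoVar.xKn i) - X (DoVar.xK1 i) * X (DoVar.xKn j) ∨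
          g = X (DoVar.xK1 i) * X (DoVar.xKn j) - X DoVar.x1n ^ 2 * X (DoVar.xP i j hij)) ∨
      (∃ i : Fin m,
          g = X (DoVar.xJ i) * X DoVar.x1 - X (DoVar.xK1 i) ^ 2 ∨
          g = X (DoVar.xJ i) * X DoVar.xn - X (DoVar.xKn i) ^ 2 ∨
          g = X (DoVar.xK1 i) * X (DoVar.xKn i) - X DoVar.x1n ^ 2 * X (DoVar.xJ i) ∨
          g = X (DoVar.xKn i) * X DoVar.x1 - X DoVar.x1n ^ 2 * X (DoVar.xK1 i) ∨
          g = X (DoVar.yK1 i) - X DoVar.x1n * X (DoVar.xK1 i) ∨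
          g = X (DoVar.yKn i) - X DoVar.x1n * X (DoVar.xKn i) ∨
          g = X (DoVar.xK1 i) * X DoVar.xn - X DoVar.x1n ^ 2 * X (DoVar.xKn i)) ∨
      g = X DoVar.x1 * X DoVar.xn - X DoVar.x1n ^ 4}

/-- The set `in(𝒢_{D_{2m+1}})` of the first-written monomials of the binomials of
`𝒢_{D_{2m+1}}`. -/
noncomputable def inGDo (K : Type*) [Field K] (m : ℕ) : Set (MvPolynomial (DoVar m) K) :=
  {g | (∃ (i j k l : Fin m) (hij : i < j) (hjk : j < k) (hkl : k < l),
          g = X (DoVar.xP i k (hij.trans hjk)) * X (DoVar.xP j l (hjk.trans hkl)) ∨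
          g = X (DoVar.xP i l (hij.trans (hjk.trans hkl))) * X (DoVar.xP j k hjk)) ∨
      (∃ (i j k : Fin m) (hij : i < j) (hjk : j < k),
          g = X (DoVar.xP j k hjk) * X (DoVar.xK1 i) ∨
          g = X (DoVar.xP i k (hij.trans hjk)) * X (DoVar.xK1 j) ∨
          g = X (DoVar.xP j k hjk) * X (DoVar.xKn i) ∨
          g = X (DoVar.xP i k (hij.trans hjk)) * X (DoVar.xKn j) ∨
          g = X (DoVar.xJ j) * X (DoVar.xP i k (hij.trans hjk)) ∨
          g = X (DoVar.xP i j hij) * X (DoVar.xP i k (hij.trans hjk)) ∨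
          g = X (DoVar.xJ k) * X (DoVar.xP i j hij)) ∨
      (∃ (i j : Fin m) (hij : i < j),
          g = X (DoVar.xJ i) * X (DoVar.xJ j) ∨
          g = X (DoVar.xP i j hij) * X DoVar.x1 ∨
          g = X (DoVar.xP i j hij) * X DoVar.xn ∨
          g = X (DoVar.xP i j hij) * X (DoVar.xK1 i) ∨
          g = X (DoVar.xP i j hij) * X (DoVar.xKn i) ∨
          g = X (DoVar.xJ j) * X (DoVar.xK1 i) ∨
          g = X (DoVar.xJ j) * X (DoVar.xKn i) ∨
          g = X (DoVar.xK1 j) * X (DoVar.xKn i) ∨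
          g = X (DoVar.xK1 i) * X (DoVar.xKn j)) ∨
      (∃ i : Fin m,
          g = X (DoVar.xJ i) * X DoVar.x1 ∨
          g = X (DoVar.xJ i) * X DoVar.xn ∨
          g = X (DoVar.xK1 i) * X (DoVar.xKn i) ∨
          g = X (DoVar.xKn i) * X DoVar.x1 ∨
          g = X (DoVar.yK1 i) ∨
          g = X (DoVar.yKn i) ∨
          g = X (DoVar.xK1 i) * X DoVar.xn) ∨
      g = X DoVar.x1 * X DoVar.xn}


/-!
Standard monomials are closed under division and `π` is multiplicative, so when two standard
monomials with the same image share a variable it can be cancelled, and by induction it suffices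
to show that two standard monomials with the same image and no variable in common are both `1`.
The `y`'s are initial, so they do not occur. The exponent of `u_{2s+3}` is that of `x_{2s+3}`.
The initial monomials of degree two leave at most one of `u_1`, `u_n` with exponent larger than
that of `x_{1,n}`, which is therefore the minimum of the two; and `x_1` (resp. `x_n`) can divide
one of the monomials only if it divides the other. What remains is a multigraph on `J` with loops
`x_i` of weight two, half-edges `x_{i,1}` or `x_{i,n}`, and edges `x_{k,ℓ}`, on which both monomials
induce the same vertex weights. At the largest vertex of positive weight the initial monomials
force the two graphs to share a loop, a half-edge, or the edge coming from the previous vertex of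
positive weight (edges of a standard monomial neither cross nor nest).
-/

open Finset Function

theorem Finsupp.injOn_of_disjoint_eq_zero {σ A : Type*} [AddCommMonoid A] [IsRightCancelAdd A]
    (φ : (σ →₀ ℕ) →+ A) {S : Set (σ →₀ ℕ)} (hS : IsLowerSet S)
    (h : ∀ d ∈ S, ∀ d' ∈ S, φ d = φ d' → (∀ v, d v = 0 ∨ d' v = 0) → d = 0) :
    Set.InjOn φ S := by
  intro d hd d' hd' hφ
  induction d using WellFoundedLT.induction generalizing d' with
  | ind d ih =>
  by_cases hcommon : ∃ v, d v ≠ 0 ∧ d' v ≠ 0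
  · obtain ⟨v, hv, hv'⟩ := hcommon
    obtain ⟨e, rfl⟩ : ∃ e, d = e + single v 1 :=
      ⟨_, (tsub_add_cancel_of_le (single_le_iff.2 (Nat.one_le_iff_ne_zero.2 hv))).symm⟩
    obtain ⟨e', rfl⟩ : ∃ e', d' = e' + single v 1 :=
      ⟨_, (tsub_add_cancel_of_le (single_le_iff.2 (Nat.one_le_iff_ne_zero.2 hv'))).symm⟩
    have hlt : e < e + single v 1 := lt_add_of_pos_right e (pos_iff_ne_zero.2 (by simp))
    rw [ih e hlt (hS le_self_add hd) (hS le_self_add hd')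
      (add_right_cancel (by simpa only [map_add] using hφ))]
  · simp only [not_exists, not_and, not_not] at hcommon
    have hdisj v : d v = 0 ∨ d' v = 0 := (eq_or_ne (d v) 0).imp_right (hcommon v)
    rw [h d hd d' hd' hφ hdisj, h d' hd' d hd hφ.symm fun v => (hdisj v).symm]

lemma eq_zero_of_mem_upperBounds_support {α M : Type*} [Preorder α] [Zero M] {f : α → M}
    {t s : α} (ht : t ∈ upperBounds (support f)) (hts : t < s) : f s = 0 :=
  notMem_support.1 fun hs => (ht hs).not_gt hts

section VertexWeight

variable {ι : Type*} [Fintype ι] {J K : ι → ℕ} {P : ι → ι → ℕ}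

/-- The exponent of `u_t` in the image of `∏ x_t ^ J t * x_{t,1} ^ K t * x_{s,t} ^ P s t`. -/
def vertexWeight (J K : ι → ℕ) (P : ι → ι → ℕ) (t : ι) : ℕ :=
  2 * J t + K t + ∑ s, P s t + ∑ s, P t s

lemma vertexWeight_add (J K J' K' : ι → ℕ) (P P' : ι → ι → ℕ) :
    vertexWeight (J + J') (K + K') (P + P') = vertexWeight J K P + vertexWeight J' K' P' := by
  funext t
  simp only [vertexWeight, Pi.add_apply, sum_add_distrib]
  ring

lemma vertexWeight_ne_zero_left {s t : ι} (h : P s t ≠ 0) : vertexWeight J K P s ≠ 0 := by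
  have := single_le_sum (f := (P s ·)) (fun _ _ => Nat.zero_le _) (mem_univ t)
  unfold vertexWeight
  omega

lemma vertexWeight_ne_zero_right {s t : ι} (h : P s t ≠ 0) : vertexWeight J K P t ≠ 0 := by
  have := single_le_sum (f := (P · t)) (fun _ _ => Nat.zero_le _) (mem_univ s)
  unfold vertexWeight
  omega

lemma vertexWeight_eq_zero_iff : vertexWeight J K P = 0 ↔ J = 0 ∧ K = 0 ∧ P = 0 := by
  simp only [funext_iff, Pi.zero_apply, vertexWeight, Nat.add_eq_zero_iff, sum_eq_zero_iff,
    mem_univ, true_implies, mul_eq_zero, OfNat.ofNat_ne_zero, false_or]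
  exact ⟨fun h => ⟨fun t => (h t).1.1.1, fun t => (h t).1.1.2, fun s t => (h t).1.2 s⟩,
    fun ⟨hJ, hK, hP⟩ t => ⟨⟨⟨hJ t, hK t⟩, fun s => hP s t⟩, fun s => hP t s⟩⟩

end VertexWeight

/-- The exponents `J t` of `x_t`, `K t` of `x_{t,1}` (or of `x_{t,n}`) and `P s t` of `x_{s,t}`
(zero unless `s < t`) of a monomial that no initial monomial in these variables divides. -/
structure Admissible {ι : Type*} [LinearOrder ι] (J K : ι → ℕ) (P : ι → ι → ℕ) : Prop where
  pair_supp : ∀ s t, ¬ s < t → P s t = 0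
  jj : ∀ s t, s < t → J s = 0 ∨ J t = 0
  pk : ∀ i k t, t < k → P i k = 0 ∨ K t = 0
  pj_mid : ∀ i j k, i < j → j < k → P i k = 0 ∨ J j = 0
  pj_high : ∀ i j k, i < j → j < k → P i j = 0 ∨ J k = 0
  pp_left : ∀ i j k, i < j → j < k → P i j = 0 ∨ P i k = 0
  pp_cross : ∀ i j k l, i < j → j < k → k < l → P i k = 0 ∨ P j l = 0
  pp_nest : ∀ i j k l, i < j → j < k → k < l → P i l = 0 ∨ P j k = 0
  kj : ∀ i j, i < j → K i = 0 ∨ J j = 0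

namespace Admissible

variable {ι : Type*} [LinearOrder ι] {J K J' K' : ι → ℕ} {P P' : ι → ι → ℕ} {t : ι}

lemma lt_of_ne_zero (h : Admissible J K P) {s t : ι} (hst : P s t ≠ 0) : s < t :=
  not_not.1 fun hn => hst (h.pair_supp s t hn)

variable [Fintype ι]

lemma row_eq_zero_of_top (h : Admissible J K P)
    (ht : t ∈ upperBounds (support (vertexWeight J K P))) (s : ι) : P t s = 0 :=
  not_not.1 fun hts => vertexWeight_ne_zero_right hts
    (eq_zero_of_mem_upperBounds_support ht (h.lt_of_ne_zero hts))

lemma vertexWeight_top (h : Admissible J K P)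
    (ht : t ∈ upperBounds (support (vertexWeight J K P))) :
    vertexWeight J K P t = 2 * J t + K t + ∑ s, P s t := by
  simp [vertexWeight, h.row_eq_zero_of_top ht]

lemma K_eq_zero_of_J_top (h : Admissible J K P)
    (ht : t ∈ upperBounds (support (vertexWeight J K P))) (hJ : J t ≠ 0) {s : ι} (hs : s ≠ t) :
    K s = 0 := by
  rcases hs.lt_or_gt with hst | hts
  · exact (h.kj s t hst).resolve_right hJ
  · have := eq_zero_of_mem_upperBounds_support ht hts
    unfold vertexWeight at this
    omega

lemma vertexWeight_eq_of_J_top (h : Admissible J K P)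
    (ht : t ∈ upperBounds (support (vertexWeight J K P))) (hJ : J t ≠ 0) {s : ι} (hst : s < t) :
    vertexWeight J K P s = P s t := by
  have hJs : J s = 0 := (h.jj s t hst).resolve_right hJ
  have hcol : ∑ r, P r s = 0 := sum_eq_zero fun r _ => not_not.1 fun hrs =>
    hJ ((h.pj_high r s t (h.lt_of_ne_zero hrs) hst).resolve_left hrs)
  have hrow : ∑ r, P s r = P s t := sum_eq_single t (fun r _ hrt => not_not.1 fun hsr => by
    rcases hrt.lt_or_gt with hrt | htr
    · exact hJ ((h.pj_high s r t (h.lt_of_ne_zero hsr) hrt).resolve_left hsr)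
    · exact vertexWeight_ne_zero_right hsr (eq_zero_of_mem_upperBounds_support ht htr))
    (by simp)
  simp [vertexWeight, hJs, h.K_eq_zero_of_J_top ht hJ hst.ne, hcol, hrow]

lemma J_ne_zero_of_J_top (h : Admissible J K P) (h' : Admissible J' K' P')
    (hV : vertexWeight J K P = vertexWeight J' K' P') (hK : ∑ s, K s = ∑ s, K' s)
    (hP : ∀ s t, P s t = 0 ∨ P' s t = 0)
    (ht : t ∈ upperBounds (support (vertexWeight J K P))) (hJ : J t ≠ 0) : J' t ≠ 0 := by
  intro hJ'
  have hsumK : ∑ s, K s = K t :=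
    sum_eq_single t (fun s _ hs => h.K_eq_zero_of_J_top ht hJ hs) (by simp)
  have hcol' : ∑ s, P' s t = 0 := sum_eq_zero fun s _ => not_not.1 fun hst => by
    have hVs := vertexWeight_ne_zero_left (J := J') (K := K') hst
    rw [← hV, h.vertexWeight_eq_of_J_top ht hJ (h'.lt_of_ne_zero hst)] at hVs
    exact (hP s t).elim hVs hst
  have hVt := h.vertexWeight_top ht
  have hVt' := h'.vertexWeight_top (hV ▸ ht)
  have := single_le_sum (f := K') (fun _ _ => Nat.zero_le _) (mem_univ t)
  rw [← hV] at hVt'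
  omega

lemma exists_P_ne_zero_of_top (h : Admissible J K P)
    (ht : t ∈ upperBounds (support (vertexWeight J K P))) (hVt : vertexWeight J K P t ≠ 0)
    (hJ : J t = 0) (hK : K t = 0) : ∃ i, P i t ≠ 0 := by
  by_contra! hcol
  simp [h.vertexWeight_top ht, hJ, hK, hcol] at hVt

lemma sum_K_eq_zero_of_top (h : Admissible J K P)
    (ht : t ∈ upperBounds (support (vertexWeight J K P))) (hVt : vertexWeight J K P t ≠ 0)
    (hJ : J t = 0) (hK : K t = 0) : ∑ s, K s = 0 := by
  obtain ⟨i, hi⟩ := h.exists_P_ne_zero_of_top ht hVt hJ hK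
  refine sum_eq_zero fun s _ => ?_
  rcases lt_trichotomy s t with hst | rfl | hts
  · exact (h.pk i t s hst).resolve_left hi
  · exact hK
  · have := eq_zero_of_mem_upperBounds_support ht hts
    unfold vertexWeight at this
    omega

lemma P_ne_zero_of_top (h : Admissible J K P)
    (ht : t ∈ upperBounds (support (vertexWeight J K P))) (hVt : vertexWeight J K P t ≠ 0)
    (hJ : J t = 0) (hK : K t = 0) {i : ι} (hit : i < t) (hVi : vertexWeight J K P i ≠ 0)
    (hi : i ∈ upperBounds (support (vertexWeight J K P) ∩ Set.Iio t)) : P i t ≠ 0 := by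
  obtain ⟨i₀, hi₀⟩ := h.exists_P_ne_zero_of_top ht hVt hJ hK
  have hi₀i : i₀ ≤ i := hi ⟨vertexWeight_ne_zero_left hi₀, h.lt_of_ne_zero hi₀⟩
  intro hit0
  have hi₀i : i₀ < i := lt_of_le_of_ne hi₀i (by rintro rfl; exact hi₀ hit0)
  have hJi : J i = 0 := (h.pj_mid i₀ i t hi₀i hit).resolve_left hi₀
  have hKi : K i = 0 := (h.pk i₀ t i hit).resolve_left hi₀
  -- an edge `(s, i)` would cross, share its left end with, or nest inside the edge `(i₀, t)`
  have hcol : ∑ s, P s i = 0 := sum_eq_zero fun s _ => not_not.1 fun hsi => by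
    have hsi' := h.lt_of_ne_zero hsi
    rcases lt_trichotomy s i₀ with hs | rfl | hs
    · exact hi₀ ((h.pp_cross s i₀ i t hs hi₀i hit).resolve_left hsi)
    · exact hi₀ ((h.pp_left s i t hsi' hit).resolve_left hsi)
    · exact hsi ((h.pp_nest i₀ s i t hs hsi' hit).resolve_left hi₀)
  have hrow : ∑ s, P i s = 0 := sum_eq_zero fun s _ => not_not.1 fun his => by
    have hVs := vertexWeight_ne_zero_right (J := J) (K := K) his
    rcases (ht hVs).lt_or_eq with hst | rfl
    · exact (hi ⟨hVs, hst⟩).not_gt (h.lt_of_ne_zero his)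
    · exact his hit0
  exact hVi (by simp [vertexWeight, hJi, hKi, hcol, hrow])

theorem eq_zero_of_disjoint (h : Admissible J K P) (h' : Admissible J' K' P')
    (hV : vertexWeight J K P = vertexWeight J' K' P') (hK : ∑ s, K s = ∑ s, K' s)
    (hJd : ∀ t, J t = 0 ∨ J' t = 0) (hKd : ∀ t, K t = 0 ∨ K' t = 0)
    (hPd : ∀ s t, P s t = 0 ∨ P' s t = 0) : J = 0 ∧ K = 0 ∧ P = 0 := by
  refine vertexWeight_eq_zero_iff.1 (not_not.1 fun hne => ?_)
  obtain ⟨t, hVt, ht⟩ := Set.exists_max_image (support (vertexWeight J K P)) id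
    (Set.toFinite _) (support_nonempty_iff.2 hne)
  replace ht : t ∈ upperBounds (support (vertexWeight J K P)) := ht
  have ht' := hV ▸ ht
  have hVt' : vertexWeight J' K' P' t ≠ 0 := hV ▸ hVt
  have hJ : J t = 0 := not_not.1 fun hJ =>
    (hJd t).elim hJ (h.J_ne_zero_of_J_top h' hV hK hPd ht hJ)
  have hJ' : J' t = 0 := not_not.1 fun hJ' =>
    (hJd t).elim (h'.J_ne_zero_of_J_top h hV.symm hK.symm (fun s t => (hPd s t).symm) ht' hJ') hJ'
  have hKt : K t = 0 := not_not.1 fun hKt => by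
    have := single_le_sum (f := K) (fun _ _ => Nat.zero_le _) (mem_univ t)
    have := h'.sum_K_eq_zero_of_top ht' hVt' hJ' ((hKd t).resolve_left hKt)
    omega
  have hKt' : K' t = 0 := not_not.1 fun hKt' => by
    have := single_le_sum (f := K') (fun _ _ => Nat.zero_le _) (mem_univ t)
    have := h.sum_K_eq_zero_of_top ht hVt hJ ((hKd t).resolve_right hKt')
    omega
  obtain ⟨i₀, hi₀⟩ := h.exists_P_ne_zero_of_top ht hVt hJ hKt
  obtain ⟨i, ⟨hVi, hit⟩, hi⟩ := Set.exists_max_image (support (vertexWeight J K P) ∩ Set.Iio t)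
    id (Set.toFinite _) ⟨i₀, vertexWeight_ne_zero_left hi₀, h.lt_of_ne_zero hi₀⟩
  replace hi : i ∈ upperBounds (support (vertexWeight J K P) ∩ Set.Iio t) := hi
  exact (hPd i t).elim (h.P_ne_zero_of_top ht hVt hJ hKt hit hVi hi)
    (h'.P_ne_zero_of_top ht' hVt' hJ' hKt' hit (hV ▸ hVi) (hV ▸ hi))

end Admissible

/-- The exponents `a` of `x_1`, `b` of `x_n`, `L t` of `x_{t,n}` join those of `Admissible`;
the remaining fields exclude the initial monomials of degree two in `x_1` or `x_n`, and
`x_{s,1} x_{t,n}`. -/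
structure StandardExponents {ι : Type*} [LinearOrder ι] (a b : ℕ) (J K L : ι → ℕ)
    (P : ι → ι → ℕ) : Prop where
  admissible_K : Admissible J K P
  admissible_L : Admissible J L P
  ab : a = 0 ∨ b = 0
  aJ : ∀ t, a = 0 ∨ J t = 0
  bJ : ∀ t, b = 0 ∨ J t = 0
  aL : ∀ t, a = 0 ∨ L t = 0
  bK : ∀ t, b = 0 ∨ K t = 0
  kl : ∀ s t, K s = 0 ∨ L t = 0
  aP : ∀ s t, a = 0 ∨ P s t = 0
  bP : ∀ s t, b = 0 ∨ P s t = 0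

namespace StandardExponents

variable {ι : Type*} [LinearOrder ι] {a b a' b' : ℕ} {J K L J' K' L' : ι → ℕ}
  {P P' : ι → ι → ℕ}

lemma swap (h : StandardExponents a b J K L P) : StandardExponents b a J L K P where
  admissible_K := h.admissible_L
  admissible_L := h.admissible_K
  ab := h.ab.symm
  aJ := h.bJ
  bJ := h.aJ
  aL := h.bK
  bK := h.aL
  kl s t := (h.kl t s).symm
  aP := h.bP
  bP := h.aP

variable [Fintype ι]

lemma eq_zero_and_sum_eq_zero (h : StandardExponents a b J K L P) :
    (a = 0 ∧ ∑ t, K t = 0) ∨ (b = 0 ∧ ∑ t, L t = 0) := by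
  by_cases hK : ∃ s, K s ≠ 0
  · obtain ⟨s, hs⟩ := hK
    exact .inr ⟨(h.bK s).resolve_right hs, sum_eq_zero fun t _ => (h.kl s t).resolve_left hs⟩
  · simp only [not_exists, not_not] at hK
    rcases eq_or_ne a 0 with ha | ha
    · exact .inl ⟨ha, sum_eq_zero fun t _ => hK t⟩
    · exact .inr ⟨h.ab.resolve_left ha, sum_eq_zero fun t _ => (h.aL t).resolve_left ha⟩

/-- With `e` the exponent of `x_{1,n}`, the two arguments of `min` are the exponents of `u_1` and
`u_n`. -/
lemma eq_min (h : StandardExponents a b J K L P) (e : ℕ) :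
    e = min (4 * a + e + 2 * ∑ t, K t) (4 * b + e + 2 * ∑ t, L t) := by
  rcases h.eq_zero_and_sum_eq_zero with ⟨ha, hK⟩ | ⟨hb, hL⟩ <;> omega

lemma vertexWeight_eq_of_ne_zero (h : StandardExponents a b J K L P) (ha : a ≠ 0) :
    vertexWeight J (K + L) P = K := by
  funext t
  simp [vertexWeight, (h.aJ t).resolve_left ha, (h.aL t).resolve_left ha,
    fun s t => (h.aP s t).resolve_left ha]

lemma ne_zero_of_ne_zero (h : StandardExponents a b J K L P)
    (hE : 4 * a + 2 * ∑ t, K t = 4 * a' + 2 * ∑ t, K' t)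
    (hV : vertexWeight J (K + L) P = vertexWeight J' (K' + L') P') (ha : a ≠ 0) : a' ≠ 0 := by
  have hK' : ∑ t, K' t ≤ ∑ t, K t := by
    rw [← h.vertexWeight_eq_of_ne_zero ha, hV]
    exact sum_le_sum fun t _ => by simp only [vertexWeight, Pi.add_apply]; omega
  omega

lemma eq_zero_and_eq_zero (h : StandardExponents a b J K L P)
    (h' : StandardExponents a' b' J' K' L' P')
    (hE : 4 * a + 2 * ∑ t, K t = 4 * a' + 2 * ∑ t, K' t)
    (hV : vertexWeight J (K + L) P = vertexWeight J' (K' + L') P') (ha : a = 0 ∨ a' = 0) :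
    a = 0 ∧ a' = 0 :=
  ⟨not_not.1 fun ha0 => ha.elim ha0 (h.ne_zero_of_ne_zero hE hV ha0),
    not_not.1 fun ha0 => ha.elim (h'.ne_zero_of_ne_zero hE.symm hV.symm ha0) ha0⟩

theorem eq_zero_of_disjoint (h : StandardExponents a b J K L P)
    (h' : StandardExponents a' b' J' K' L' P')
    (hE₁ : 4 * a + 2 * ∑ t, K t = 4 * a' + 2 * ∑ t, K' t)
    (hE₂ : 4 * b + 2 * ∑ t, L t = 4 * b' + 2 * ∑ t, L' t)
    (hV : vertexWeight J (K + L) P = vertexWeight J' (K' + L') P')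
    (ha : a = 0 ∨ a' = 0) (hb : b = 0 ∨ b' = 0) (hJ : ∀ t, J t = 0 ∨ J' t = 0)
    (hK : ∀ t, K t = 0 ∨ K' t = 0) (hL : ∀ t, L t = 0 ∨ L' t = 0)
    (hP : ∀ s t, P s t = 0 ∨ P' s t = 0) :
    a = 0 ∧ b = 0 ∧ J = 0 ∧ K = 0 ∧ L = 0 ∧ P = 0 := by
  obtain ⟨ha, ha'⟩ := h.eq_zero_and_eq_zero h' hE₁ hV ha
  obtain ⟨hb, hb'⟩ :=
    h.swap.eq_zero_and_eq_zero h'.swap hE₂ (by rwa [add_comm L, add_comm L']) hb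
  have hSK : ∑ t, K t = ∑ t, K' t := by omega
  have hSL : ∑ t, L t = ∑ t, L' t := by omega
  have eq_zero_of_sum {f : ι → ℕ} (hf : ∑ t, f t = 0) : f = 0 :=
    (Fintype.sum_eq_zero_iff_of_nonneg fun _ => Nat.zero_le _).1 hf
  rcases h.eq_zero_and_sum_eq_zero with ⟨-, hK0⟩ | ⟨-, hL0⟩
  · obtain rfl := eq_zero_of_sum hK0
    obtain rfl := eq_zero_of_sum (hSK ▸ hK0)
    rw [zero_add, zero_add] at hV
    obtain ⟨rfl, rfl, rfl⟩ := h.admissible_L.eq_zero_of_disjoint h'.admissible_L hV hSL hJ hL hP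
    exact ⟨ha, hb, rfl, rfl, rfl, rfl⟩
  · obtain rfl := eq_zero_of_sum hL0
    obtain rfl := eq_zero_of_sum (hSL ▸ hL0)
    rw [add_zero, add_zero] at hV
    obtain ⟨rfl, rfl, rfl⟩ := h.admissible_K.eq_zero_of_disjoint h'.admissible_K hV hSK hJ hK hP
    exact ⟨ha, hb, rfl, rfl, rfl, rfl⟩

end StandardExponents

noncomputable def doExponent (m : ℕ) : DoVar m → (ℕ →₀ ℕ)
  | .x1 => Finsupp.single 1 4
  | .xn => Finsupp.single (2 * m + 1) 4
  | .xJ t => Finsupp.single (2 * t.val + 2) 2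
  | .xJc t => Finsupp.single (2 * t.val + 3) 1
  | .xP s t _ => Finsupp.single (2 * s.val + 2) 1 + Finsupp.single (2 * t.val + 2) 1
  | .x1n => Finsupp.single 1 1 + Finsupp.single (2 * m + 1) 1
  | .xK1 t => Finsupp.single (2 * t.val + 2) 1 + Finsupp.single 1 2
  | .xKn t => Finsupp.single (2 * t.val + 2) 1 + Finsupp.single (2 * m + 1) 2
  | .yK1 t => Finsupp.single (2 * t.val + 2) 1 + Finsupp.single 1 3 + Finsupp.single (2 * m + 1) 1
  | .yKn t => Finsupp.single (2 * t.val + 2) 1 + Finsupp.single 1 1 + Finsupp.single (2 * m + 1) 3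

lemma doImage_eq_monomial (K : Type*) [Field K] (m : ℕ) (v : DoVar m) :
    doImage K m v = monomial (doExponent m v) 1 := by
  cases v <;> simp [doImage, doExponent, X, monomial_mul, monomial_pow]

noncomputable def doWeight (m : ℕ) : (DoVar m →₀ ℕ) →ₗ[ℕ] (ℕ →₀ ℕ) :=
  Finsupp.linearCombination ℕ (doExponent m)

lemma piDo_monomial (K : Type*) [Field K] (m : ℕ) (d : DoVar m →₀ ℕ) :
    piDo K m (monomial d 1) = monomial (doWeight m d) 1 := by
  simp only [piDo, aeval_monomial, map_one, one_mul, doImage_eq_monomial, monomial_pow, one_pow,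
    doWeight, Finsupp.linearCombination_apply]
  rw [monomial_finsupp_sum_index, map_one, one_mul]

def pairExponent {m : ℕ} (d : DoVar m →₀ ℕ) (s t : Fin m) : ℕ :=
  if h : s < t then d (.xP s t h) else 0

lemma pairExponent_of_lt {m : ℕ} (d : DoVar m →₀ ℕ) {s t : Fin m} (h : s < t) :
    pairExponent d s t = d (.xP s t h) :=
  dif_pos h

lemma pairExponent_add {m : ℕ} (d d' : DoVar m →₀ ℕ) :
    pairExponent (d + d') = pairExponent d + pairExponent d' := by
  funext s t
  simp only [pairExponent, Pi.add_apply]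
  split_ifs <;> simp

lemma doWeight_apply_odd (m : ℕ) (d : DoVar m →₀ ℕ) (s : Fin (m - 1)) :
    doWeight m d (2 * s.val + 3) = d (.xJc s) := by
  induction d using Finsupp.induction_linear with
  | zero => simp
  | add f g hf hg => simp only [map_add, Finsupp.add_apply, hf, hg]
  | single v k =>
    classical
    cases v <;> simp [doWeight, doExponent, Finsupp.single_apply, Fin.val_inj] <;> omega

lemma doWeight_apply_even (m : ℕ) (d : DoVar m →₀ ℕ) (t : Fin m) :
    doWeight m d (2 * t.val + 2) =
      vertexWeight (d ∘ .xJ) (d ∘ .xK1 + d ∘ .xKn) (pairExponent d) t + d (.yK1 t)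
        + d (.yKn t) := by
  induction d using Finsupp.induction_linear with
  | zero => simp [vertexWeight, pairExponent]
  | add f g hf hg =>
    simp only [map_add, Finsupp.add_apply, hf, hg, Finsupp.coe_add, Pi.add_comp, pairExponent_add]
    rw [add_add_add_comm (f ∘ _), vertexWeight_add, Pi.add_apply]
    ring
  | single v k =>
    classical
    cases v with
    | xP a b hab =>
      simp only [doWeight, Finsupp.linearCombination_single, doExponent, smul_add,
        Finsupp.smul_single, smul_eq_mul, mul_one, Finsupp.coe_add, Pi.add_apply,
        Finsupp.single_apply, Nat.add_right_cancel_iff, mul_eq_mul_left_iff, Fin.val_inj,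
        OfNat.ofNat_ne_zero, or_false, vertexWeight, comp_apply, reduceCtorEq, pairExponent,
        DoVar.xP.injEq, dite_eq_ite]
      rw [sum_eq_single a (fun s _ hs => by simp [Ne.symm hs]) (by simp),
        sum_eq_single b (fun s _ hs => by simp [Ne.symm hs]) (by simp)]
      split_ifs <;> simp_all
    | _ =>
      simp [doWeight, doExponent, vertexWeight, pairExponent, Finsupp.single_apply, Fin.val_inj] <;>
        (try split_ifs) <;> omega

lemma doWeight_apply_one {m : ℕ} (hm : 1 ≤ m) (d : DoVar m →₀ ℕ) :
    doWeight m d 1 = 4 * d .x1 + d .x1n + 2 * ∑ t, d (.xK1 t) + 3 * ∑ t, d (.yK1 t)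
      + ∑ t, d (.yKn t) := by
  induction d using Finsupp.induction_linear with
  | zero => simp
  | add f g hf hg => simp only [map_add, Finsupp.add_apply, hf, hg, sum_add_distrib]; ring
  | single v k =>
    classical
    cases v <;> simp [doWeight, doExponent, Finsupp.single_apply, Nat.one_le_iff_ne_zero.1 hm] <;>
      omega

lemma doWeight_apply_last {m : ℕ} (hm : 1 ≤ m) (d : DoVar m →₀ ℕ) :
    doWeight m d (2 * m + 1) = 4 * d .xn + d .x1n + 2 * ∑ t, d (.xKn t) + ∑ t, d (.yK1 t)
      + 3 * ∑ t, d (.yKn t) := by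
  induction d using Finsupp.induction_linear with
  | zero => simp
  | add f g hf hg => simp only [map_add, Finsupp.add_apply, hf, hg, sum_add_distrib]; ring
  | single v k =>
    classical
    cases v <;> simp [doWeight, doExponent, Finsupp.single_apply, Nat.one_le_iff_ne_zero.1 hm] <;>
      (try split_ifs) <;> omega

def IsStandard (K : Type*) [Field K] {m : ℕ} (d : DoVar m →₀ ℕ) : Prop :=
  ∀ g ∈ inGDo K m, ¬ g ∣ monomial d 1

lemma isLowerSet_setOf_isStandard {K : Type*} [Field K] {m : ℕ} :
    IsLowerSet {d : DoVar m →₀ ℕ | IsStandard K d} :=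
  fun _ _ hle hd g hg hdvd => hd g hg (hdvd.trans (monomial_one_dvd_monomial_one.2 hle))

namespace IsStandard

variable {K : Type*} [Field K] {m : ℕ} {d : DoVar m →₀ ℕ}

lemma eq_zero (hd : IsStandard K d) {v : DoVar m} (hX : X v ∈ inGDo K m) : d v = 0 :=
  not_not.1 fun hv => hd _ hX (X_dvd_monomial.2 (.inr hv))

lemma eq_zero_or_eq_zero (hd : IsStandard K d) {v w : DoVar m} (hvw : v ≠ w)
    (hX : X v * X w ∈ inGDo K m) : d v = 0 ∨ d w = 0 := by
  classical
  by_contra! h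
  refine hd _ hX ?_
  rw [X, X, monomial_mul, one_mul, monomial_one_dvd_monomial_one]
  intro u
  simp only [Finsupp.add_apply, Finsupp.single_apply]
  split_ifs <;> subst_vars <;> simp_all <;> omega

/- In the membership proofs below, the anonymous constructors pick the block of `inGDo`
(quadruples, triples, pairs, single indices) and its indices; `simp` then finds the monomial. -/

lemma yK1_eq_zero (hd : IsStandard K d) (t : Fin m) : d (.yK1 t) = 0 :=
  hd.eq_zero (.inr (.inr (.inr (.inl ⟨t, by simp⟩))))

lemma yKn_eq_zero (hd : IsStandard K d) (t : Fin m) : d (.yKn t) = 0 :=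
  hd.eq_zero (.inr (.inr (.inr (.inl ⟨t, by simp⟩))))

lemma admissible (hd : IsStandard K d) {κ : Fin m → DoVar m} (hκ : κ = .xK1 ∨ κ = .xKn) :
    Admissible (d ∘ .xJ) (d ∘ κ) (pairExponent d) := by
  rcases hκ with rfl | rfl <;>
  exact {
    pair_supp := fun s t h => dif_neg h
    jj := fun s t hst => hd.eq_zero_or_eq_zero (by simp [hst.ne])
      (.inr (.inr (.inl ⟨s, t, hst, by simp⟩)))
    pk := fun i k t htk => by
      by_cases hik : i < k
      · rw [pairExponent_of_lt d hik]
        rcases lt_trichotomy t i with hti | rfl | hit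
        · exact hd.eq_zero_or_eq_zero (by simp) (.inr (.inl ⟨t, i, k, hti, hik, by simp⟩))
        · exact hd.eq_zero_or_eq_zero (by simp) (.inr (.inr (.inl ⟨t, k, hik, by simp⟩)))
        · exact hd.eq_zero_or_eq_zero (by simp) (.inr (.inl ⟨i, t, k, hit, htk, by simp⟩))
      · exact .inl (dif_neg hik)
    pj_mid := fun i j k hij hjk => by
      rw [pairExponent_of_lt d (hij.trans hjk)]
      exact (hd.eq_zero_or_eq_zero (by simp) (.inr (.inl ⟨i, j, k, hij, hjk, by simp⟩))).symm
    pj_high := fun i j k hij hjk => by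
      rw [pairExponent_of_lt d hij]
      exact (hd.eq_zero_or_eq_zero (by simp) (.inr (.inl ⟨i, j, k, hij, hjk, by simp⟩))).symm
    pp_left := fun i j k hij hjk => by
      rw [pairExponent_of_lt d hij, pairExponent_of_lt d (hij.trans hjk)]
      exact hd.eq_zero_or_eq_zero (by simp [hjk.ne]) (.inr (.inl ⟨i, j, k, hij, hjk, by simp⟩))
    pp_cross := fun i j k l hij hjk hkl => by
      rw [pairExponent_of_lt d (hij.trans hjk), pairExponent_of_lt d (hjk.trans hkl)]
      exact hd.eq_zero_or_eq_zero (by simp [hij.ne]) (.inl ⟨i, j, k, l, hij, hjk, hkl, by simp⟩)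
    pp_nest := fun i j k l hij hjk hkl => by
      rw [pairExponent_of_lt d ((hij.trans hjk).trans hkl), pairExponent_of_lt d hjk]
      exact hd.eq_zero_or_eq_zero (by simp [hij.ne]) (.inl ⟨i, j, k, l, hij, hjk, hkl, by simp⟩)
    kj := fun i j hij =>
      (hd.eq_zero_or_eq_zero (by simp) (.inr (.inr (.inl ⟨i, j, hij, by simp⟩)))).symm }

lemma standardExponents (hd : IsStandard K d) :
    StandardExponents (d .x1) (d .xn) (d ∘ .xJ) (d ∘ .xK1) (d ∘ .xKn) (pairExponent d) where
  admissible_K := hd.admissible (.inl rfl)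
  admissible_L := hd.admissible (.inr rfl)
  ab := hd.eq_zero_or_eq_zero (by simp) (.inr (.inr (.inr (.inr rfl))))
  aJ t := (hd.eq_zero_or_eq_zero (by simp) (.inr (.inr (.inr (.inl ⟨t, by simp⟩))))).symm
  bJ t := (hd.eq_zero_or_eq_zero (by simp) (.inr (.inr (.inr (.inl ⟨t, by simp⟩))))).symm
  aL t := (hd.eq_zero_or_eq_zero (by simp) (.inr (.inr (.inr (.inl ⟨t, by simp⟩))))).symm
  bK t := (hd.eq_zero_or_eq_zero (by simp) (.inr (.inr (.inr (.inl ⟨t, by simp⟩))))).symm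
  kl s t := by
    rcases lt_trichotomy s t with hst | rfl | hts
    · exact hd.eq_zero_or_eq_zero (by simp) (.inr (.inr (.inl ⟨s, t, hst, by simp⟩)))
    · exact hd.eq_zero_or_eq_zero (by simp) (.inr (.inr (.inr (.inl ⟨s, by simp⟩))))
    · exact hd.eq_zero_or_eq_zero (by simp) (.inr (.inr (.inl ⟨t, s, hts, by simp⟩)))
  aP s t := by
    by_cases hst : s < t
    · rw [pairExponent_of_lt d hst]
      exact (hd.eq_zero_or_eq_zero (by simp) (.inr (.inr (.inl ⟨s, t, hst, by simp⟩)))).symm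
    · exact .inr (dif_neg hst)
  bP s t := by
    by_cases hst : s < t
    · rw [pairExponent_of_lt d hst]
      exact (hd.eq_zero_or_eq_zero (by simp) (.inr (.inr (.inl ⟨s, t, hst, by simp⟩)))).symm
    · exact .inr (dif_neg hst)

theorem eq_zero_of_disjoint (hm : 1 ≤ m) {d' : DoVar m →₀ ℕ} (hd : IsStandard K d)
    (hd' : IsStandard K d') (hw : doWeight m d = doWeight m d')
    (hdisj : ∀ v, d v = 0 ∨ d' v = 0) : d = 0 := by
  have h₁ := congrArg (· 1) hw
  have hₙ := congrArg (· (2 * m + 1)) hw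
  have hodd (s : Fin (m - 1)) := congrArg (· (2 * s.val + 3)) hw
  have heven (t : Fin m) := congrArg (· (2 * t.val + 2)) hw
  simp only [doWeight_apply_one hm, doWeight_apply_last hm, doWeight_apply_odd,
    doWeight_apply_even, hd.yK1_eq_zero, hd.yKn_eq_zero, hd'.yK1_eq_zero, hd'.yKn_eq_zero,
    sum_const_zero, mul_zero, add_zero] at h₁ hₙ hodd heven
  have he := hd.standardExponents.eq_min (d .x1n)
  have he' := hd'.standardExponents.eq_min (d' .x1n)
  simp only [comp_apply] at he he'
  obtain ⟨ha, hb, hJ, hK, hL, hP⟩ := hd.standardExponents.eq_zero_of_disjoint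
    hd'.standardExponents (by simp only [comp_apply]; omega) (by simp only [comp_apply]; omega)
    (funext heven) (hdisj _) (hdisj _) (fun _ => hdisj _) (fun _ => hdisj _) (fun _ => hdisj _)
    (fun s t => by
      by_cases hst : s < t
      · simp only [pairExponent_of_lt _ hst, hdisj]
      · exact .inl (dif_neg hst))
  ext v
  rw [Finsupp.coe_zero, Pi.zero_apply]
  cases v with
  | x1 => exact ha
  | xn => exact hb
  | xJ t => exact congrFun hJ t
  | xJc s => exact (hdisj _).elim id (hodd s).trans
  | xP s t hst => simpa [pairExponent_of_lt _ hst] using congrFun (congrFun hP s) t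
  | x1n => exact (hdisj _).elim id fun h => by omega
  | xK1 t => exact congrFun hK t
  | xKn t => exact congrFun hL t
  | yK1 t => exact hd.yK1_eq_zero t
  | yKn t => exact hd.yKn_eq_zero t

end IsStandard

/-- if `M` and `M′` are monomials of `R` such that no monomial of
`in(𝒢_{D_{2m+1}})` divides `M` and no monomial of `in(𝒢_{D_{2m+1}})` divides `M′`, then
`π(M) = π(M′)` implies `M = M′`. -/
theorem piDo_inj_on_standard_monomials (K : Type*) [Field K] (m : ℕ) (hm : 2 ≤ m)
    (M M' : MvPolynomial (DoVar m) K)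
    (hM : ∃ d : DoVar m →₀ ℕ, M = monomial d (1 : K))
    (hM' : ∃ d : DoVar m →₀ ℕ, M' = monomial d (1 : K))
    (hMdvd : ∀ g ∈ inGDo K m, ¬ g ∣ M)
    (hM'dvd : ∀ g ∈ inGDo K m, ¬ g ∣ M')
    (heq : piDo K m M = piDo K m M') :
    M = M' := by
  obtain ⟨d, rfl⟩ := hM
  obtain ⟨d', rfl⟩ := hM'
  rw [piDo_monomial, piDo_monomial, monomial_left_inj one_ne_zero] at heq
  rw [Finsupp.injOn_of_disjoint_eq_zero (doWeight m).toAddMonoidHom isLowerSet_setOf_isStandard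
    (fun _ hd _ hd' hw => hd.eq_zero_of_disjoint (by omega) hd' hw) hMdvd hM'dvd heq]
end

section
/- The set 𝒢_{E_7} = {x_7x_8 − x_9x_{10}, x_6x_9 − x_8x_{10}, x_6x_7 − x_{10}², x_4x_{10} − x_8x_9, x_4x_7 − x_9², x_4x_6 − x_8²} is a Gröbner basis of the toric ideal I_{E_7} with respect to the lexicographic order with x_1 > x_2 > ... > x_{10}: the ideal generated by the lex-leading monomials of all nonzero elements of I_{E_7} equals the ideal generated by the monomials x_7x_8, x_6x_9, x_6x_7, x_4x_{10}, x_4x_7, x_4x_6; in particular the ideal generated by 𝒢_{E_7} equals I_{E_7}. -/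
open MvPolynomial

/-- The toric map `π : K[x_1,…,x_10] → K[u_1,…,u_7]` of the `E_7` configuration, where
`x_i` is the variable `X (i-1) : MvPolynomial (Fin 10) K` and `u_j = X (j-1)` in
`MvPolynomial (Fin 7) K`:
`π(x_1)=u_1, π(x_2)=u_2, π(x_3)=u_3, π(x_4)=u_4², π(x_5)=u_5, π(x_6)=u_6², π(x_7)=u_7²,
π(x_8)=u_4u_6, π(x_9)=u_4u_7, π(x_{10})=u_6u_7`. -/
noncomputable def piE7 (K : Type*) [Field K] :
    MvPolynomial (Fin 10) K →ₐ[K] MvPolynomial (Fin 7) K :=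
  aeval ![X 0, X 1, X 2, X 3 ^ 2, X 4, X 5 ^ 2, X 6 ^ 2, X 3 * X 5, X 3 * X 6, X 5 * X 6]

/-- The set `𝒢_{E_7}` of six binomials (with `x_i = X (i-1)`):
`x_7x_8 − x_9x_{10}`, `x_6x_9 − x_8x_{10}`, `x_6x_7 − x_{10}²`, `x_4x_{10} − x_8x_9`,
`x_4x_7 − x_9²`, `x_4x_6 − x_8²`. -/
noncomputable def GE7 (K : Type*) [Field K] : Set (MvPolynomial (Fin 10) K) :=
  { X 6 * X 7 - X 8 * X 9,      -- x7x8 − x9x10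
    X 5 * X 8 - X 7 * X 9,      -- x6x9 − x8x10
    X 5 * X 6 - X 9 ^ 2,        -- x6x7 − x10²
    X 3 * X 9 - X 7 * X 8,      -- x4x10 − x8x9
    X 3 * X 6 - X 8 ^ 2,        -- x4x7 − x9²
    X 3 * X 5 - X 7 ^ 2 }       -- x4x6 − x8²

/-- `lexLT rank a b` : the exponent vector `a` is strictly smaller than `b` in the
lexicographic order determined by the ranking `rank` of the variables (smaller rank =
greater variable): in the greatest variable where they differ, `a` has the smaller
exponent. -/
def lexLT {σ : Type*} (rank : σ → ℕ) (a b : σ →₀ ℕ) : Prop :=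
  ∃ v, a v < b v ∧ ∀ w, rank w < rank v → a w = b w

/-- `IsLeadExp lt f d` : `d` is the exponent vector of the leading monomial of `f` with
respect to the strict term order `lt`. -/
def IsLeadExp {σ K : Type*} [Field K] (lt : (σ →₀ ℕ) → (σ →₀ ℕ) → Prop)
    (f : MvPolynomial σ K) (d : σ →₀ ℕ) : Prop :=
  d ∈ f.support ∧ ∀ e ∈ f.support, e ≠ d → lt e d

/-- The ideal of leading monomials (initial ideal) of an ideal `I` with respect to the
strict term order `lt`. -/
noncomputable def initialIdeal {σ K : Type*} [Field K] (lt : (σ →₀ ℕ) → (σ →₀ ℕ) → Prop)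
    (I : Ideal (MvPolynomial σ K)) : Ideal (MvPolynomial σ K) :=
  Ideal.span {p | ∃ f ∈ I, f ≠ 0 ∧ ∃ d, IsLeadExp lt f d ∧ p = monomial d (1 : K)}

/-!
Write `E` for the exponent map of `π`, so that `π(x^e) = u^{E e}`; the coefficient of `π f` at
`u^m` is then the sum of the coefficients of `f` over the fibre `E⁻¹(m)`. Call `d` standard if
`x^d` is divisible by none of the six leading monomials. Solving `E e = E d` case by case shows
that a standard `d` is the lex-smallest point of its fibre, so `E` is injective on standard
exponents. Hence the leading exponent of a nonzero kernel element, whose fibre must meet the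
support a second time in a lex-smaller exponent, is never standard; conversely each of the six
monomials leads a binomial of `𝒢_{E_7} ⊆ ker π`. Finally, dividing a kernel element by
`𝒢_{E_7}` leaves a remainder in the kernel with standard support, which must vanish.
-/

open Finsupp (single)
open scoped MonomialOrder

namespace MvPolynomial

variable {σ τ R : Type*} [CommSemiring R]

theorem aeval_monomial_monomial (v : σ → τ →₀ ℕ) (d : σ →₀ ℕ) (c : R) :
    aeval (fun i => monomial (v i) (1 : R)) (monomial d c) =
      monomial (Finsupp.linearCombination ℕ v d) c := by
  rw [aeval_monomial, Finsupp.linearCombination_apply, monomial_finsupp_sum_index,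
    algebraMap_eq]
  congr 1
  refine Finsupp.prod_congr fun i _ => ?_
  rw [monomial_pow, one_pow]

theorem coeff_aeval_monomial [DecidableEq τ] (v : σ → τ →₀ ℕ) (f : MvPolynomial σ R)
    (m : τ →₀ ℕ) :
    coeff m (aeval (fun i => monomial (v i) (1 : R)) f) =
      ∑ e ∈ f.support with Finsupp.linearCombination ℕ v e = m, coeff e f := by
  conv_lhs => rw [f.as_sum]
  simp only [map_sum, aeval_monomial_monomial, coeff_sum, coeff_monomial, Finset.sum_filter]

theorem exists_ne_linearCombination_eq_of_aeval_eq_zero (v : σ → τ →₀ ℕ)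
    {f : MvPolynomial σ R} (hf : aeval (fun i => monomial (v i) (1 : R)) f = 0)
    {d : σ →₀ ℕ} (hd : d ∈ f.support) :
    ∃ e ∈ f.support, e ≠ d ∧
      Finsupp.linearCombination ℕ v e = Finsupp.linearCombination ℕ v d := by
  classical
  by_contra! hno
  have hfibre : {e ∈ f.support | Finsupp.linearCombination ℕ v e =
      Finsupp.linearCombination ℕ v d} = {d} := by
    ext e
    simp only [Finset.mem_filter, Finset.mem_singleton]
    exact ⟨fun ⟨he, hE⟩ => by_contra fun hne => hno e he hne hE,
      fun h => by subst h; exact ⟨hd, rfl⟩⟩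
  have := coeff_aeval_monomial v f (Finsupp.linearCombination ℕ v d)
  rw [hf, hfibre, Finset.sum_singleton, coeff_zero] at this
  exact mem_support_iff.mp hd this.symm

end MvPolynomial

section Lex

variable {σ : Type*} [LinearOrder σ] {rank : σ → ℕ}

theorem lexLT_iff_toLex_lt (hrank : StrictMono rank) {a b : σ →₀ ℕ} :
    lexLT rank a b ↔ toLex a < toLex b := by
  rw [Finsupp.Lex.lt_iff]
  simp only [lexLT, hrank.lt_iff_lt]
  exact ⟨fun ⟨v, h, hw⟩ => ⟨v, hw, h⟩, fun ⟨v, hw, h⟩ => ⟨v, h, hw⟩⟩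

theorem lexLT_eq_lex_lt [WellFoundedGT σ] (hrank : StrictMono rank) :
    lexLT rank = fun a b => a ≺[MonomialOrder.lex] b :=
  funext₂ fun _ _ => propext (lexLT_iff_toLex_lt hrank)

theorem lexLT_or_lexLT_of_ne (hrank : StrictMono rank) {a b : σ →₀ ℕ} (h : a ≠ b) :
    lexLT rank a b ∨ lexLT rank b a := by
  simp only [lexLT_iff_toLex_lt hrank]
  exact lt_or_gt_of_ne (toLex.injective.ne h)

end Lex

namespace MonomialOrder

variable {σ : Type*} (m : MonomialOrder σ)

theorem isLeadExp_degree {K : Type*} [Field K] {f : MvPolynomial σ K} (hf : f ≠ 0) :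
    IsLeadExp (· ≺[m] ·) f (m.degree f) :=
  ⟨(m.degree_mem_support_iff f).mpr hf, fun _ he hne =>
    lt_of_le_of_ne (m.le_degree he) (m.toSyn.injective.ne hne)⟩

variable {R : Type*} [CommRing R] [Nontrivial R] {L t : σ →₀ ℕ}

theorem degree_monomial_sub_monomial (h : t ≺[m] L) :
    m.degree (monomial L (1 : R) - monomial t 1) = L := by
  classical
  have hdeg (d : σ →₀ ℕ) : m.degree (monomial d (1 : R)) = d := by
    rw [degree_monomial, if_neg one_ne_zero]
  rw [m.degree_sub_of_lt (by rwa [hdeg, hdeg]), hdeg]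

theorem leadingCoeff_monomial_sub_monomial (h : t ≺[m] L) :
    m.leadingCoeff (monomial L (1 : R) - monomial t 1) = 1 := by
  classical
  rw [m.leadingCoeff_sub_of_lt (by rwa [degree_monomial, degree_monomial, if_neg one_ne_zero,
    if_neg one_ne_zero]), leadingCoeff_monomial]

end MonomialOrder

theorem Finsupp.single_add_single_le_iff {σ : Type*} {i j : σ} (hij : i ≠ j)
    {d : σ →₀ ℕ} : single i 1 + single j 1 ≤ d ↔ 0 < d i ∧ 0 < d j := by
  classical
  simp only [Finsupp.le_def, Finsupp.add_apply, Finsupp.single_apply]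
  refine ⟨fun h => ⟨?_, ?_⟩, fun h k => ?_⟩
  · have := h i
    rw [if_pos rfl, if_neg hij.symm] at this
    omega
  · have := h j
    rw [if_neg hij, if_pos rfl] at this
    omega
  · split_ifs with hi hj hj
    · exact absurd (hi.trans hj.symm) hij
    all_goals subst_vars; omega

namespace E7

noncomputable def vE7 : Fin 10 → Fin 7 →₀ ℕ :=
  ![single 0 1, single 1 1, single 2 1, single 3 2, single 4 1, single 5 2, single 6 2,
    single 3 1 + single 5 1, single 3 1 + single 6 1, single 5 1 + single 6 1]

local notation "E" => Finsupp.linearCombination ℕ vE7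

theorem piE7_eq_aeval (K : Type*) [Field K] :
    piE7 K = aeval fun i => monomial (vE7 i) (1 : K) := by
  unfold piE7
  congr 1
  funext i
  fin_cases i <;> simp only [X_pow_eq_monomial] <;> simp [vE7, X, monomial_mul]

theorem linearCombination_vE7_eq_iff {d e : Fin 10 →₀ ℕ} :
    E e = E d ↔
      e 0 = d 0 ∧ e 1 = d 1 ∧ e 2 = d 2 ∧ 2 * e 3 + e 7 + e 8 = 2 * d 3 + d 7 + d 8 ∧
      e 4 = d 4 ∧ 2 * e 5 + e 7 + e 9 = 2 * d 5 + d 7 + d 9 ∧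
      2 * e 6 + e 8 + e 9 = 2 * d 6 + d 8 + d 9 := by
  simp [Finsupp.ext_iff, Fin.forall_fin_succ, Finsupp.linearCombination_apply,
    Finsupp.sum_fintype, Fin.sum_univ_succ, vE7, Finsupp.single_apply]
  omega

/-- The exponents `(lead, tail)` of the six binomials of `𝒢_{E_7}`. -/
def binomialExps : Set ((Fin 10 →₀ ℕ) × (Fin 10 →₀ ℕ)) :=
  {(single 6 1 + single 7 1, single 8 1 + single 9 1),
   (single 5 1 + single 8 1, single 7 1 + single 9 1),
   (single 5 1 + single 6 1, single 9 2),
   (single 3 1 + single 9 1, single 7 1 + single 8 1),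
   (single 3 1 + single 6 1, single 8 2),
   (single 3 1 + single 5 1, single 7 2)}

theorem GE7_eq_image (K : Type*) [Field K] :
    GE7 K = (fun p => monomial p.1 (1 : K) - monomial p.2 1) '' binomialExps := by
  simp only [GE7, X_pow_eq_monomial]
  simp [binomialExps, Set.image_insert_eq, X, monomial_mul]

theorem leadingMonomials_eq_image (K : Type*) [Field K] :
    ({X 6 * X 7, X 5 * X 8, X 5 * X 6, X 3 * X 9, X 3 * X 6, X 3 * X 5} :
      Set (MvPolynomial (Fin 10) K)) =
      (fun s => monomial s (1 : K)) '' (Prod.fst '' binomialExps) := by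
  simp [binomialExps, Set.image_insert_eq, X, monomial_mul]

theorem lex_lt_snd_fst {p : (Fin 10 →₀ ℕ) × (Fin 10 →₀ ℕ)} (hp : p ∈ binomialExps) :
    p.2 ≺[MonomialOrder.lex] p.1 := by
  rw [MonomialOrder.lex_lt_iff, ← lexLT_iff_toLex_lt (rank := fun v : Fin 10 => v.val)
    Fin.val_strictMono]
  simp only [binomialExps, Set.mem_insert_iff, Set.mem_singleton_iff] at hp
  rcases hp with rfl | rfl | rfl | rfl | rfl | rfl
  · exact ⟨6, by simp, fun w hw => by fin_cases w <;> simp_all⟩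
  · exact ⟨5, by simp, fun w hw => by fin_cases w <;> simp_all⟩
  · exact ⟨5, by simp, fun w hw => by fin_cases w <;> simp_all⟩
  · exact ⟨3, by simp, fun w hw => by fin_cases w <;> simp_all⟩
  · exact ⟨3, by simp, fun w hw => by fin_cases w <;> simp_all⟩
  · exact ⟨3, by simp, fun w hw => by fin_cases w <;> simp_all⟩

theorem linearCombination_fst_eq_snd {p : (Fin 10 →₀ ℕ) × (Fin 10 →₀ ℕ)}
    (hp : p ∈ binomialExps) : E p.1 = E p.2 := by
  simp only [binomialExps, Set.mem_insert_iff, Set.mem_singleton_iff] at hp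
  rcases hp with rfl | rfl | rfl | rfl | rfl | rfl <;>
    rw [linearCombination_vE7_eq_iff] <;> simp

theorem binomial_mem_ker {K : Type*} [Field K] {p : (Fin 10 →₀ ℕ) × (Fin 10 →₀ ℕ)}
    (hp : p ∈ binomialExps) : monomial p.1 (1 : K) - monomial p.2 1 ∈ RingHom.ker (piE7 K) := by
  rw [RingHom.mem_ker, piE7_eq_aeval, map_sub, aeval_monomial_monomial, aeval_monomial_monomial,
    linearCombination_fst_eq_snd hp, sub_self]

def IsStandard (d : Fin 10 →₀ ℕ) : Prop := ∀ p ∈ binomialExps, ¬ p.1 ≤ d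

theorem isStandard_iff {d : Fin 10 →₀ ℕ} : IsStandard d ↔
    (d 6 = 0 ∨ d 7 = 0) ∧ (d 5 = 0 ∨ d 8 = 0) ∧ (d 5 = 0 ∨ d 6 = 0) ∧
    (d 3 = 0 ∨ d 9 = 0) ∧ (d 3 = 0 ∨ d 6 = 0) ∧ (d 3 = 0 ∨ d 5 = 0) := by
  simp [IsStandard, binomialExps, Finsupp.single_add_single_le_iff]
  omega

theorem IsStandard.not_lexLT {d e : Fin 10 →₀ ℕ} (hd : IsStandard d) (he : E e = E d) :
    ¬ lexLT (fun v : Fin 10 => v.val) e d := by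
  rw [isStandard_iff] at hd
  rw [linearCombination_vE7_eq_iff] at he
  rintro ⟨v, hlt, hpre⟩
  -- `he` already equates coordinates 0, 1, 2, 4; the others enter only through these prefixes
  have h3 : 3 < v.val → e 3 = d 3 := hpre 3
  have h5 : 5 < v.val → e 5 = d 5 := hpre 5
  have h6 : 6 < v.val → e 6 = d 6 := hpre 6
  have h7 : 7 < v.val → e 7 = d 7 := hpre 7
  have h8 : 8 < v.val → e 8 = d 8 := hpre 8
  fin_cases v <;> simp only [Fin.isValue, Fin.reduceFinMk] at hlt h3 h5 h6 h7 h8 <;> omega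

theorem IsStandard.eq_of_linearCombination_eq {d e : Fin 10 →₀ ℕ} (hd : IsStandard d)
    (he : IsStandard e) (h : E e = E d) : e = d := by
  by_contra hne
  rcases lexLT_or_lexLT_of_ne Fin.val_strictMono hne with hlt | hlt
  · exact hd.not_lexLT h hlt
  · exact he.not_lexLT h.symm hlt

variable {K : Type*} [Field K]

theorem aeval_eq_zero_of_mem_ker {f : MvPolynomial (Fin 10) K} (hf : f ∈ RingHom.ker (piE7 K)) :
    aeval (fun i => monomial (vE7 i) (1 : K)) f = 0 := by
  rwa [RingHom.mem_ker, piE7_eq_aeval] at hf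

theorem not_isStandard_of_isLeadExp {f : MvPolynomial (Fin 10) K}
    (hf : f ∈ RingHom.ker (piE7 K)) {d : Fin 10 →₀ ℕ}
    (hd : IsLeadExp (lexLT fun v : Fin 10 => v.val) f d) : ¬ IsStandard d := by
  obtain ⟨e, he, hne, hE⟩ :=
    exists_ne_linearCombination_eq_of_aeval_eq_zero vE7 (aeval_eq_zero_of_mem_ker hf) hd.1
  exact fun hstd => hstd.not_lexLT hE (hd.2 e he hne)

theorem eq_zero_of_mem_ker_of_isStandard {f : MvPolynomial (Fin 10) K}
    (hf : f ∈ RingHom.ker (piE7 K)) (hstd : ∀ d ∈ f.support, IsStandard d) : f = 0 := by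
  by_contra hf0
  obtain ⟨d, hd⟩ := ne_zero_iff.mp hf0
  obtain ⟨e, he, hne, hE⟩ := exists_ne_linearCombination_eq_of_aeval_eq_zero vE7
    (aeval_eq_zero_of_mem_ker hf) (mem_support_iff.mpr hd)
  exact hne ((hstd d (mem_support_iff.mpr hd)).eq_of_linearCombination_eq (hstd e he) hE)

theorem initialIdeal_le_span :
    initialIdeal (lexLT fun v : Fin 10 => v.val) (RingHom.ker (piE7 K)) ≤
      Ideal.span ((fun s => monomial s (1 : K)) '' (Prod.fst '' binomialExps)) := by
  rw [initialIdeal, Ideal.span_le]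
  rintro _ ⟨f, hf, -, d, hd, rfl⟩
  rw [SetLike.mem_coe, mem_ideal_span_monomial_image]
  intro xi hxi
  obtain rfl := Finset.mem_singleton.mp (support_monomial_subset hxi)
  simpa [IsStandard] using not_isStandard_of_isLeadExp hf hd

theorem span_le_initialIdeal :
    Ideal.span ((fun s => monomial s (1 : K)) '' (Prod.fst '' binomialExps)) ≤
      initialIdeal (lexLT fun v : Fin 10 => v.val) (RingHom.ker (piE7 K)) := by
  rw [Ideal.span_le]
  rintro _ ⟨_, ⟨p, hp, rfl⟩, rfl⟩
  have hlt := lex_lt_snd_fst hp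
  have hne : monomial p.1 (1 : K) - monomial p.2 1 ≠ 0 := by
    rw [← MonomialOrder.lex.leadingCoeff_ne_zero_iff,
      MonomialOrder.lex.leadingCoeff_monomial_sub_monomial hlt]
    exact one_ne_zero
  have hlead := MonomialOrder.lex.isLeadExp_degree hne
  rw [MonomialOrder.lex.degree_monomial_sub_monomial hlt,
    ← lexLT_eq_lex_lt Fin.val_strictMono] at hlead
  exact Ideal.subset_span ⟨_, binomial_mem_ker hp, hne, p.1, hlead, rfl⟩

theorem span_GE7_le_ker : Ideal.span (GE7 K) ≤ RingHom.ker (piE7 K) := by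
  rw [GE7_eq_image, Ideal.span_le]
  rintro _ ⟨p, hp, rfl⟩
  exact binomial_mem_ker hp

theorem ker_le_span_GE7 : RingHom.ker (piE7 K) ≤ Ideal.span (GE7 K) := by
  intro f hf
  have hunit : ∀ b ∈ GE7 K, IsUnit (MonomialOrder.lex.leadingCoeff b) := by
    rw [GE7_eq_image]
    rintro _ ⟨p, hp, rfl⟩
    rw [MonomialOrder.lex.leadingCoeff_monomial_sub_monomial (lex_lt_snd_fst hp)]
    exact isUnit_one
  obtain ⟨g, r, rfl, -, hr⟩ := MonomialOrder.lex.div_set hunit f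
  set q := Finsupp.linearCombination _ (fun b : GE7 K => (b : MvPolynomial (Fin 10) K)) g
  have hq : q ∈ Ideal.span (GE7 K) := by
    rw [← Subtype.range_coe (s := GE7 K), Ideal.span, ← Finsupp.range_linearCombination]
    exact LinearMap.mem_range_self _ g
  have hstd : ∀ c ∈ r.support, IsStandard c := fun c hc p hp => by
    have := hr c hc _ ((GE7_eq_image K).symm ▸ Set.mem_image_of_mem _ hp)
    rwa [MonomialOrder.lex.degree_monomial_sub_monomial (lex_lt_snd_fst hp)] at this
  have hr0 : r = 0 := by
    refine eq_zero_of_mem_ker_of_isStandard ?_ hstd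
    simpa using sub_mem hf (span_GE7_le_ker hq)
  rwa [hr0, add_zero]

end E7

/-- `𝒢_{E_7}` is a Gröbner basis of `I_{E_7}` with respect to the
lexicographic order with `x_1 > x_2 > ⋯ > x_{10}`: the ideal generated by the lex-leading
monomials of all nonzero elements of `I_{E_7}` equals the ideal generated by the monomials
`x_7x_8, x_6x_9, x_6x_7, x_4x_{10}, x_4x_7, x_4x_6`; in particular the ideal generated by
`𝒢_{E_7}` equals `I_{E_7}`. -/
theorem GE7_is_groebner (K : Type*) [Field K] :
    initialIdeal (lexLT (fun v : Fin 10 => v.val)) (RingHom.ker (piE7 K)) =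
      Ideal.span ({ X 6 * X 7, X 5 * X 8, X 5 * X 6, X 3 * X 9, X 3 * X 6, X 3 * X 5 } :
        Set (MvPolynomial (Fin 10) K)) ∧
    Ideal.span (GE7 K) = RingHom.ker (piE7 K) := by
  rw [E7.leadingMonomials_eq_image]
  exact ⟨le_antisymm E7.initialIdeal_le_span E7.span_le_initialIdeal,
    le_antisymm E7.span_GE7_le_ker E7.ker_le_span_GE7⟩
end
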